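/- Let I ⊂ S = K[x_0, x_1, x_2] be a saturated Borel-fixed monomial ideal over an infinite field K of characteristic ≠ 2, with Hilbert polynomial of S/I equal to the constant 4. Then I equals either ⟨x_0, x_1^4⟩ or ⟨x_0^2, x_0 x_1, x_1^3⟩. -/

import Mathlib

/-!
Borel-fixedness lets one move all of the exponent of `x₂` onto `x₀` or onto `x₁` and, when
`2 ≠ 0`, one factor of `x₁²` onto `x₀`. With saturation the first move shows that `x₂` is a
non-zero-divisor modulo `I`, so `I` is determined by its staircase in the `(x₀, x₁)`-plane and
the Hilbert function in degree `i` counts the staircase points of total degree at most `i`.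
A constant Hilbert polynomial `4` thus means a staircase of four points, and the Borel moves
leave only `{(0,0), (0,1), (0,2), (0,3)}` and `{(0,0), (1,0), (0,1), (0,2)}`.
-/

open MvPolynomial

/-- A matrix is upper triangular if entries below the diagonal vanish. -/
def UpperTriangular {K : Type} [Field K] {m : ℕ} (γ : Matrix (Fin m) (Fin m) K) : Prop :=
  ∀ i j : Fin m, j < i → γ i j = 0

/-- The linear action of a matrix `γ` on the polynomial ring, `γ · x_j = Σ_i γ_{ij} x_i`. -/
noncomputable def borelAct {K : Type} [Field K] {m : ℕ} (γ : Matrix (Fin m) (Fin m) K) :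
    MvPolynomial (Fin m) K →+* MvPolynomial (Fin m) K :=
  (aeval (fun j => ∑ i, C (γ i j) * X i)).toRingHom

/-- An ideal is Borel-fixed if it is fixed by every invertible upper-triangular matrix
acting linearly on the variables. -/
def BorelFixed {K : Type} [Field K] {m : ℕ} (I : Ideal (MvPolynomial (Fin m) K)) : Prop :=
  ∀ γ : Matrix (Fin m) (Fin m) K, UpperTriangular γ → IsUnit γ.det →
    Ideal.map (borelAct γ) I = I

/-- A monomial ideal: with every polynomial it contains all of its monomials. -/
def IsMonomialIdeal {K : Type} [Field K] {m : ℕ} (I : Ideal (MvPolynomial (Fin m) K)) : Prop :=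
  ∀ f ∈ I, ∀ u ∈ f.support, (monomial u 1 : MvPolynomial (Fin m) K) ∈ I

/-- The strong stability exchange condition: `m ∈ I`, `x_j ∣ m`, `i < j` imply `x_i m / x_j ∈ I`. -/
def StronglyStable {K : Type} [Field K] {m : ℕ} (I : Ideal (MvPolynomial (Fin m) K)) : Prop :=
  ∀ u : Fin m →₀ ℕ, (monomial u 1 : MvPolynomial (Fin m) K) ∈ I →
    ∀ i j : Fin m, i < j → u j ≠ 0 →
      (monomial (u + Finsupp.single i 1 - Finsupp.single j 1) 1 : MvPolynomial (Fin m) K) ∈ I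

/-- The saturation `(I : J^∞) = ⋃_k (I : J^k)`. -/
noncomputable def idealSat {R : Type} [CommRing R] (I J : Ideal R) : Ideal R :=
  ⨆ k : ℕ, Submodule.colon I ((J ^ k : Ideal R) : Set R)

/-- The irrelevant maximal ideal `⟨x_0, …, x_m⟩`. -/
noncomputable def irrelevant (m : ℕ) (K : Type) [Field K] : Ideal (MvPolynomial (Fin m) K) :=
  Ideal.span (Set.range X)

/-- The Hilbert function of `S/I`: the dimension of the image of the degree-`i`
homogeneous component in `S/I`. -/
noncomputable def hfn {K : Type} [Field K] {m : ℕ} (I : Ideal (MvPolynomial (Fin m) K))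
    (i : ℕ) : ℕ :=
  Module.finrank K
    ((homogeneousSubmodule (Fin m) K i).map (Ideal.Quotient.mkₐ K I).toLinearMap)

/-- The set of (exponents of) minimal monomial generators of a monomial ideal. -/
def minGens {K : Type} [Field K] {m : ℕ} (I : Ideal (MvPolynomial (Fin m) K)) :
    Set (Fin m →₀ ℕ) :=
  {u | (monomial u 1 : MvPolynomial (Fin m) K) ∈ I ∧
    ∀ v : Fin m →₀ ℕ, v ≤ u → v ≠ u → (monomial v 1 : MvPolynomial (Fin m) K) ∉ I}

theorem coeff_X_add_X_pow {σ R : Type*} [CommSemiring R] {i j : σ} (hij : i ≠ j) {n k : ℕ}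
    (hk : k ≤ n) :
    coeff (Finsupp.single i k + Finsupp.single j (n - k)) ((X i + X j : MvPolynomial σ R) ^ n) =
      n.choose k := by
  classical
  have hterm : ∀ l, (X i ^ l * X j ^ (n - l) * (n.choose l : MvPolynomial σ R)) =
      monomial (Finsupp.single i l + Finsupp.single j (n - l)) (n.choose l : R) := by
    intro l
    rw [← map_natCast C, ← monomial_zero', X_pow_eq_monomial, X_pow_eq_monomial, monomial_mul,
      monomial_mul, add_zero, one_mul, one_mul]
  simp only [add_pow, hterm, coeff_sum]
  rw [Finset.sum_eq_single k]
  · rw [coeff_monomial, if_pos rfl]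
  · intro l _ hlk
    rw [coeff_monomial, if_neg]
    intro h
    have := congrArg (· i) h
    simp [hij] at this
    exact hlk this
  · intro h
    exact absurd (Finset.mem_range.2 (Nat.lt_succ_of_le hk)) h

section MonomialIdeal

variable {K : Type} [Field K] {m : ℕ} {I : Ideal (MvPolynomial (Fin m) K)}

theorem IsMonomialIdeal.mem_iff (hI : IsMonomialIdeal I) {f : MvPolynomial (Fin m) K} :
    f ∈ I ↔ ∀ u ∈ f.support, (monomial u 1 : MvPolynomial (Fin m) K) ∈ I := by
  refine ⟨hI f, fun h => ?_⟩
  rw [← support_sum_monomial_coeff f]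
  refine I.sum_mem fun u hu => ?_
  simpa [C_mul_monomial] using I.mul_mem_left (C (coeff u f)) (h u hu)

theorem IsMonomialIdeal.eq_span_monomial (hI : IsMonomialIdeal I) (S : Set (Fin m →₀ ℕ))
    (hS : ∀ u, (monomial u 1 : MvPolynomial (Fin m) K) ∈ I ↔ ∃ s ∈ S, s ≤ u) :
    I = Ideal.span ((fun s => monomial s 1) '' S) := by
  ext f
  rw [hI.mem_iff, mem_ideal_span_monomial_image]
  simp only [hS]

theorem monomial_mem_of_le {u v : Fin m →₀ ℕ} (huv : u ≤ v)
    (hu : (monomial u 1 : MvPolynomial (Fin m) K) ∈ I) :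
    (monomial v 1 : MvPolynomial (Fin m) K) ∈ I :=
  I.mem_of_dvd (monomial_dvd_monomial.2 ⟨Or.inr huv, one_dvd _⟩) hu

theorem mem_of_forall_mul_X_mem (hsat : idealSat I (irrelevant m K) = I)
    {f : MvPolynomial (Fin m) K} (hf : ∀ l, f * X l ∈ I) : f ∈ I := by
  have hle : irrelevant m K ≤ I.colon {f} := by
    refine Ideal.span_le.2 ?_
    rintro _ ⟨l, rfl⟩
    simpa [Submodule.mem_colon, mul_comm] using hf l
  rw [← hsat]
  refine Submodule.mem_iSup_of_mem 1 ?_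
  rw [pow_one, Submodule.mem_colon]
  intro p hp
  simpa [Submodule.mem_colon, mul_comm] using hle hp

theorem upperTriangular_transvection {i j : Fin m} (hij : i < j) (c : K) :
    UpperTriangular (Matrix.transvection i j c) := by
  intro a b hba
  simp only [Matrix.transvection, Matrix.add_apply, Matrix.one_apply, Matrix.single_apply]
  rw [if_neg hba.ne', if_neg (by omega)]
  simp

theorem borelAct_transvection_X (i j l : Fin m) :
    borelAct (Matrix.transvection i j (1 : K)) (X l) = X l + if l = j then X i else 0 := by
  simp only [borelAct, AlgHom.toRingHom_eq_coe, RingHom.coe_coe, aeval_X, Matrix.transvection,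
    Matrix.add_apply, Matrix.one_apply, Matrix.single_apply, map_add, add_mul,
    Finset.sum_add_distrib]
  split_ifs with h <;> simp [h, Ne.symm]

theorem borelAct_transvection_monomial (i j : Fin m) (u : Fin m →₀ ℕ) :
    borelAct (Matrix.transvection i j (1 : K)) (monomial u 1) =
      monomial (u.erase j) 1 * (X i + X j) ^ (u j) := by
  conv_lhs => rw [← Finsupp.erase_add_single j u, monomial_add_single]
  rw [map_mul, map_pow, borelAct_transvection_X, if_pos rfl, add_comm (X j)]
  congr 1
  refine hom_congr_vars (f₂ := RingHom.id _) ?_ (fun l hl _ => ?_) rfl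
  · ext c
    simp [borelAct]
  · rw [vars_monomial one_ne_zero, Finsupp.support_erase, Finset.mem_erase] at hl
    simp [borelAct_transvection_X, hl.1]

theorem IsMonomialIdeal.monomial_mem_of_borelFixed (hmon : IsMonomialIdeal I)
    (hbf : BorelFixed I) {i j : Fin m} (hij : i < j) {u : Fin m →₀ ℕ}
    (hu : (monomial u 1 : MvPolynomial (Fin m) K) ∈ I) {k : ℕ} (hk : k ≤ u j)
    (hchoose : ((u j).choose k : K) ≠ 0) :
    (monomial (u.erase j + (Finsupp.single i k + Finsupp.single j (u j - k))) 1 :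
      MvPolynomial (Fin m) K) ∈ I := by
  have himage : borelAct (Matrix.transvection i j (1 : K)) (monomial u 1) ∈ I := by
    rw [← hbf _ (upperTriangular_transvection hij 1)
      (by simp [Matrix.det_transvection_of_ne _ _ hij.ne])]
    exact Ideal.mem_map_of_mem _ hu
  refine hmon _ himage _ ?_
  rw [mem_support_iff, borelAct_transvection_monomial, coeff_monomial_mul, one_mul,
    coeff_X_add_X_pow hij.ne hk]
  exact hchoose

theorem IsMonomialIdeal.finrank_map_restrictSupport (hmon : IsMonomialIdeal I)
    (s : Set (Fin m →₀ ℕ)) :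
    Module.finrank K ((restrictSupport K s).map (Ideal.Quotient.mkₐ K I).toLinearMap) =
      {u ∈ s | (monomial u 1 : MvPolynomial (Fin m) K) ∉ I}.ncard := by
  set π := (Ideal.Quotient.mkₐ K I).toLinearMap
  set N := {u ∈ s | (monomial u 1 : MvPolynomial (Fin m) K) ∉ I}
  have hmap : (restrictSupport K s).map π = (restrictSupport K N).map π := by
    refine le_antisymm ?_ (Submodule.map_mono (restrictSupport_mono K fun _ hu => hu.1))
    rw [restrictSupport_eq_span, Submodule.map_span, Submodule.span_le]
    rintro _ ⟨_, ⟨u, hu, rfl⟩, rfl⟩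
    by_cases huI : (monomial u 1 : MvPolynomial (Fin m) K) ∈ I
    · have : π (monomial u 1) = 0 := Ideal.Quotient.eq_zero_iff_mem.2 huI
      rw [SetLike.mem_coe, this]
      exact Submodule.zero_mem _
    · exact Submodule.mem_map_of_mem ((monomial_mem_restrictSupport K).2 (Or.inl ⟨hu, huI⟩))
  have hinj : Function.Injective (π ∘ₗ (restrictSupport K N).subtype) := by
    rw [← LinearMap.ker_eq_bot, eq_bot_iff]
    rintro ⟨f, hf⟩ hker
    have hfI : f ∈ I := Ideal.Quotient.eq_zero_iff_mem.1 hker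
    have hsupp : f.support = ∅ :=
      Finset.eq_empty_of_forall_notMem fun u hu =>
        ((mem_restrictSupport_iff K).1 hf hu).2 (hmon f hfI u hu)
    simp [support_eq_empty.1 hsupp]
  rw [hmap, ← Submodule.range_subtype (restrictSupport K N), ← LinearMap.range_comp,
    LinearMap.finrank_range_of_inj hinj,
    Module.finrank_eq_nat_card_basis (basisRestrictSupport K N), Nat.card_coe_set_eq]

theorem IsMonomialIdeal.hfn_eq_ncard (hmon : IsMonomialIdeal I) (i : ℕ) :
    hfn I i = {u | u.degree = i ∧ (monomial u 1 : MvPolynomial (Fin m) K) ∉ I}.ncard := by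
  rw [hfn, homogeneousSubmodule_eq_finsupp_supported]
  exact hmon.finrank_map_restrictSupport _

end MonomialIdeal

theorem ncard_eq_of_truncations_ncard_eq {S : Set (ℕ × ℕ)} {k : ℕ}
    (h : ∃ N, ∀ i ≥ N, {p ∈ S | p.1 + p.2 ≤ i}.ncard = k) : S.ncard = k := by
  obtain ⟨N, hN⟩ := h
  have htrunc_finite : ∀ i, {p ∈ S | p.1 + p.2 ≤ i}.Finite := fun i =>
    (Set.finite_Iic (i, i)).subset fun p ⟨_, hp⟩ => Prod.mk_le_mk.2 ⟨by omega, by omega⟩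
  have hsub : ∀ t : Finset (ℕ × ℕ), ↑t ⊆ S →
      ↑t ⊆ {p ∈ S | p.1 + p.2 ≤ N + t.sup fun p => p.1 + p.2} := fun t hts p hp =>
    ⟨hts hp, (Finset.le_sup (f := fun p : ℕ × ℕ => p.1 + p.2) hp).trans (Nat.le_add_left _ _)⟩
  have hS : S.Finite := by
    by_contra hinf
    obtain ⟨t, hts, htcard⟩ := Set.Infinite.exists_subset_card_eq hinf (k + 1)
    have := Set.ncard_le_ncard (hsub t hts) (htrunc_finite _)
    rw [Set.ncard_coe_finset, htcard, hN _ (Nat.le_add_right _ _)] at this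
    omega
  have htrunc : {p ∈ S | p.1 + p.2 ≤ N + hS.toFinset.sup fun p => p.1 + p.2} = S :=
    (Set.sep_subset _ _).antisymm fun p hp =>
      hsub _ hS.coe_toFinset.subset (hS.mem_toFinset.2 hp)
  rw [← htrunc, hN _ (Nat.le_add_right _ _)]

theorem eq_of_isLowerSet_of_ncard_eq_four {S : Set (ℕ × ℕ)} (hlower : IsLowerSet S)
    (h₁ : ∀ a, (a + 1, 0) ∈ S → (a, 1) ∈ S) (h₂ : ∀ a, (a + 1, 1) ∈ S → (a, 2) ∈ S)
    (hcard : S.ncard = 4) :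
    S = {(0, 0), (0, 1), (0, 2), (0, 3)} ∨ S = {(0, 0), (1, 0), (0, 1), (0, 2)} := by
  lift S to Finset (ℕ × ℕ) using Set.finite_of_ncard_ne_zero (by omega)
  rw [Set.ncard_coe_finset] at hcard
  simp only [Finset.mem_coe] at h₁ h₂
  have hmem : ∀ {q}, q ∈ S → ∀ p ≤ q, p ∈ S := fun hq _ hpq => hlower hpq hq
  have hnot_five : ∀ T : Finset (ℕ × ℕ), T.card = 5 → ¬ T ⊆ S := fun T hT hTS => by
    have := Finset.card_le_card hTS
    omega
  have heq : ∀ T : Finset (ℕ × ℕ), T.card = 4 → S ⊆ T → S = T :=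
    fun T hT hST => Finset.eq_of_subset_of_card_le hST (by omega)
  obtain ⟨p₀, hp₀⟩ := Finset.card_pos.1 (by omega : 0 < S.card)
  have h00 : (0, 0) ∈ S := hmem hp₀ _ (Prod.mk_le_mk.2 ⟨Nat.zero_le _, Nat.zero_le _⟩)
  by_cases h10 : (1, 0) ∈ S
  · right
    have h20 : (2, 0) ∉ S := fun h20 => hnot_five {(0, 0), (1, 0), (2, 0), (0, 1), (1, 1)} rfl
      (by simp [Finset.insert_subset_iff, Prod.mk_le_mk, h00, h10, h20, hmem (h₁ 1 h20)])
    have h11 : (1, 1) ∉ S := fun h11 => hnot_five {(0, 0), (1, 0), (0, 1), (1, 1), (0, 2)} rfl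
      (by simp [Finset.insert_subset_iff, Prod.mk_le_mk, h00, h10, h₂ 0 h11, hmem h11])
    have h03 : (0, 3) ∉ S := fun h03 => hnot_five {(0, 0), (0, 1), (0, 2), (0, 3), (1, 0)} rfl
      (by simp [Finset.insert_subset_iff, Prod.mk_le_mk, h10, hmem h03])
    have hsub : S ⊆ {(0, 0), (1, 0), (0, 1), (0, 2)} := fun ⟨a, b⟩ hp => by
      have : ¬ 2 ≤ a := fun ha => h20 (hmem hp _ (Prod.mk_le_mk.2 ⟨ha, Nat.zero_le _⟩))
      have : ¬ (1 ≤ a ∧ 1 ≤ b) := fun hab => h11 (hmem hp _ (Prod.mk_le_mk.2 hab))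
      have : ¬ 3 ≤ b := fun hb => h03 (hmem hp _ (Prod.mk_le_mk.2 ⟨Nat.zero_le _, hb⟩))
      simp only [Finset.mem_insert, Finset.mem_singleton, Prod.mk.injEq]
      omega
    rw [heq _ rfl hsub]
    simp only [Finset.coe_insert, Finset.coe_singleton]
  · left
    have h04 : (0, 4) ∉ S := fun h04 => hnot_five {(0, 0), (0, 1), (0, 2), (0, 3), (0, 4)} rfl
      (by simp [Finset.insert_subset_iff, Prod.mk_le_mk, hmem h04])
    have hsub : S ⊆ {(0, 0), (0, 1), (0, 2), (0, 3)} := fun ⟨a, b⟩ hp => by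
      have : ¬ 1 ≤ a := fun ha => h10 (hmem hp _ (Prod.mk_le_mk.2 ⟨ha, Nat.zero_le _⟩))
      have : ¬ 4 ≤ b := fun hb => h04 (hmem hp _ (Prod.mk_le_mk.2 ⟨Nat.zero_le _, hb⟩))
      simp only [Finset.mem_insert, Finset.mem_singleton, Prod.mk.injEq]
      omega
    rw [heq _ rfl hsub]
    simp only [Finset.coe_insert, Finset.coe_singleton]


noncomputable def exp3 (a b c : ℕ) : Fin 3 →₀ ℕ :=
  Finsupp.single 0 a + Finsupp.single 1 b + Finsupp.single 2 c

@[simp] theorem exp3_apply_zero (a b c : ℕ) : exp3 a b c 0 = a := by simp [exp3]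

@[simp] theorem exp3_apply_one (a b c : ℕ) : exp3 a b c 1 = b := by simp [exp3]

@[simp] theorem exp3_apply_two (a b c : ℕ) : exp3 a b c 2 = c := by simp [exp3]

theorem exp3_eq_iff {a b c : ℕ} {u : Fin 3 →₀ ℕ} :
    exp3 a b c = u ↔ a = u 0 ∧ b = u 1 ∧ c = u 2 := by
  refine ⟨fun h => by simp [← h], fun ⟨ha, hb, hc⟩ => ?_⟩
  ext t
  fin_cases t <;> simp [ha, hb, hc]

theorem exp3_le_iff {a b c : ℕ} {u : Fin 3 →₀ ℕ} :
    exp3 a b c ≤ u ↔ a ≤ u 0 ∧ b ≤ u 1 ∧ c ≤ u 2 := by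
  simp [Finsupp.le_def, Fin.forall_fin_succ]

def staircase {K : Type} [Field K] (I : Ideal (MvPolynomial (Fin 3) K)) : Set (ℕ × ℕ) :=
  {p | (monomial (exp3 p.1 p.2 0) 1 : MvPolynomial (Fin 3) K) ∉ I}

section ThreeVariables

variable {K : Type} [Field K] {I : Ideal (MvPolynomial (Fin 3) K)}

theorem monomial_exp3_mem_of_le {a b c a' b' c' : ℕ} (ha : a ≤ a') (hb : b ≤ b') (hc : c ≤ c')
    (h : (monomial (exp3 a b c) 1 : MvPolynomial (Fin 3) K) ∈ I) :
    (monomial (exp3 a' b' c') 1 : MvPolynomial (Fin 3) K) ∈ I :=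
  monomial_mem_of_le (exp3_le_iff.2 ⟨by simpa, by simpa, by simpa⟩) h

theorem isLowerSet_staircase : IsLowerSet (staircase I) := fun _ _ hpq hq h =>
  hq (monomial_exp3_mem_of_le hpq.1 hpq.2 le_rfl h)

theorem monomial_exp3_mem_of_sat (hsat : idealSat I (irrelevant 3 K) = I) {a b c : ℕ}
    (h₀ : (monomial (exp3 (a + 1) b c) 1 : MvPolynomial (Fin 3) K) ∈ I)
    (h₁ : (monomial (exp3 a (b + 1) c) 1 : MvPolynomial (Fin 3) K) ∈ I)
    (h₂ : (monomial (exp3 a b (c + 1)) 1 : MvPolynomial (Fin 3) K) ∈ I) :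
    (monomial (exp3 a b c) 1 : MvPolynomial (Fin 3) K) ∈ I := by
  refine mem_of_forall_mul_X_mem hsat fun l => ?_
  rw [X, monomial_mul, one_mul]
  fin_cases l
  · convert h₀ using 3; ext t; fin_cases t <;> simp
  · convert h₁ using 3; ext t; fin_cases t <;> simp
  · convert h₂ using 3; ext t; fin_cases t <;> simp

variable (hmon : IsMonomialIdeal I) (hbf : BorelFixed I)
include hmon hbf

theorem monomial_exp3_mem_move_two_to_zero {a b c : ℕ}
    (h : (monomial (exp3 a b c) 1 : MvPolynomial (Fin 3) K) ∈ I) :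
    (monomial (exp3 (a + c) b 0) 1 : MvPolynomial (Fin 3) K) ∈ I := by
  convert hmon.monomial_mem_of_borelFixed hbf (i := 0) (j := 2) (by decide) h le_rfl
    (by simp) using 3
  ext t; fin_cases t <;> simp

theorem monomial_exp3_mem_move_two_to_one {a b c : ℕ}
    (h : (monomial (exp3 a b c) 1 : MvPolynomial (Fin 3) K) ∈ I) :
    (monomial (exp3 a (b + c) 0) 1 : MvPolynomial (Fin 3) K) ∈ I := by
  convert hmon.monomial_mem_of_borelFixed hbf (i := 1) (j := 2) (by decide) h le_rfl
    (by simp) using 3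
  ext t; fin_cases t <;> simp

theorem mem_staircase_one_of_succ_zero {a : ℕ} (h : (a + 1, 0) ∈ staircase I) :
    (a, 1) ∈ staircase I :=
  fun ha => h (by
    convert hmon.monomial_mem_of_borelFixed hbf (i := 0) (j := 1) (by decide) ha le_rfl
      (by simp) using 3
    ext t; fin_cases t <;> simp)

theorem mem_staircase_two_of_succ_one (hchar : (2 : K) ≠ 0) {a : ℕ}
    (h : (a + 1, 1) ∈ staircase I) :
    (a, 2) ∈ staircase I :=
  fun ha => h (by
    convert hmon.monomial_mem_of_borelFixed hbf (i := 0) (j := 1) (k := 1) (by decide) ha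
      (by simp) (by simpa using hchar) using 3
    ext t; fin_cases t <;> simp)

variable (hsat : idealSat I (irrelevant 3 K) = I)
include hsat

/-- Moving all of `x₂` onto `x₀` or onto `x₁` puts every `x₀^a' x₁^b' x₂^c` with `a' ≥ a`,
`b' ≥ b` and `a' ≥ a + c + 1` or `b' ≥ b + c + 1` into `I`; saturation then descends to
`x₀^a x₁^b x₂^c`. -/
theorem monomial_exp3_mem_of_mul_X_two_mem {a b c : ℕ}
    (h : (monomial (exp3 a b (c + 1)) 1 : MvPolynomial (Fin 3) K) ∈ I) :
    (monomial (exp3 a b c) 1 : MvPolynomial (Fin 3) K) ∈ I := by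
  have h₀ := monomial_exp3_mem_move_two_to_zero hmon hbf h
  have h₁ := monomial_exp3_mem_move_two_to_one hmon hbf h
  suffices ∀ n a' b', a ≤ a' → b ≤ b' → a + c + 1 - a' + (b + c + 1 - b') = n →
      (monomial (exp3 a' b' c) 1 : MvPolynomial (Fin 3) K) ∈ I from
    this _ a b le_rfl le_rfl rfl
  intro n
  induction n using Nat.strong_induction_on with
  | _ n ih =>
    intro a' b' ha hb hn
    by_cases hlarge : a + (c + 1) ≤ a' ∨ b + (c + 1) ≤ b'
    · rcases hlarge with ha' | hb'
      · exact monomial_exp3_mem_of_le ha' hb (Nat.zero_le _) h₀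
      · exact monomial_exp3_mem_of_le ha hb' (Nat.zero_le _) h₁
    · exact monomial_exp3_mem_of_sat hsat
        (ih _ (by omega) _ _ (by omega) hb rfl) (ih _ (by omega) _ _ ha (by omega) rfl)
        (monomial_exp3_mem_of_le ha hb le_rfl h)

theorem monomial_mem_iff_notMem_staircase (u : Fin 3 →₀ ℕ) :
    (monomial u 1 : MvPolynomial (Fin 3) K) ∈ I ↔ (u 0, u 1) ∉ staircase I := by
  rw [staircase, Set.mem_ofPred_eq, not_not]
  refine ⟨fun hu => ?_, monomial_mem_of_le (exp3_le_iff.2 (by simp))⟩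
  have hdescend : ∀ c, (monomial (exp3 (u 0) (u 1) c) 1 : MvPolynomial (Fin 3) K) ∈ I →
      (monomial (exp3 (u 0) (u 1) 0) 1 : MvPolynomial (Fin 3) K) ∈ I := by
    intro c
    induction c with
    | zero => exact id
    | succ c ih => exact fun h => ih (monomial_exp3_mem_of_mul_X_two_mem hmon hbf hsat h)
  exact hdescend _ (by rwa [(exp3_eq_iff (u := u)).2 ⟨rfl, rfl, rfl⟩])

theorem hfn_eq_ncard_staircase (i : ℕ) :
    hfn I i = {p ∈ staircase I | p.1 + p.2 ≤ i}.ncard := by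
  rw [hmon.hfn_eq_ncard]
  have himage :
      {u : Fin 3 →₀ ℕ | u.degree = i ∧ (monomial u 1 : MvPolynomial (Fin 3) K) ∉ I} =
      (fun p : ℕ × ℕ => exp3 p.1 p.2 (i - p.1 - p.2)) '' {p ∈ staircase I | p.1 + p.2 ≤ i} := by
    ext u
    simp only [Set.mem_ofPred_eq, Set.mem_image, not_not, exp3_eq_iff,
      monomial_mem_iff_notMem_staircase hmon hbf hsat, Finsupp.degree_eq_sum, Fin.sum_univ_three]
    constructor
    · rintro ⟨hdeg, hu⟩
      exact ⟨(u 0, u 1), ⟨hu, by omega⟩, rfl, rfl, by omega⟩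
    · rintro ⟨⟨a, b⟩, ⟨hp, hpi⟩, rfl, rfl, hc⟩
      exact ⟨by omega, hp⟩
  rw [himage, Set.ncard_image_of_injective]
  intro p q hpq
  have := exp3_eq_iff.1 hpq
  simp only [exp3_apply_zero, exp3_apply_one] at this
  exact Prod.ext this.1 this.2.1

end ThreeVariables

theorem borelFixed_hilbPoly_four_general {K : Type} [Field K] (hchar : (2 : K) ≠ 0)
    (I : Ideal (MvPolynomial (Fin 3) K))
    (hmon : IsMonomialIdeal I) (hbf : BorelFixed I)
    (hsat : idealSat I (irrelevant 3 K) = I)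
    (hhp : ∃ N : ℕ, ∀ i ≥ N, hfn I i = 4) :
    I = Ideal.span {(X 0 : MvPolynomial (Fin 3) K), X 1 ^ 4} ∨
    I = Ideal.span {(X 0 ^ 2 : MvPolynomial (Fin 3) K), X 0 * X 1, X 1 ^ 3} := by
  have hcard : (staircase I).ncard = 4 := ncard_eq_of_truncations_ncard_eq
    (by simpa only [hfn_eq_ncard_staircase hmon hbf hsat] using hhp)
  have hmem := monomial_mem_iff_notMem_staircase hmon hbf hsat
  rcases eq_of_isLowerSet_of_ncard_eq_four isLowerSet_staircase
    (fun _ => mem_staircase_one_of_succ_zero hmon hbf)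
    (fun _ => mem_staircase_two_of_succ_one hmon hbf hchar) hcard with hS | hS
  · left
    rw [hmon.eq_span_monomial {Finsupp.single 0 1, Finsupp.single 1 4} fun u => by
      simp [hmem, hS, Finsupp.single_le_iff]
      omega]
    rw [Set.image_insert_eq, Set.image_singleton, X_pow_eq_monomial]
    rfl
  · right
    rw [hmon.eq_span_monomial
      {Finsupp.single 0 2, Finsupp.single 0 1 + Finsupp.single 1 1, Finsupp.single 1 3} fun u => by
      simp [hmem, hS, Finsupp.le_def, Fin.forall_fin_succ]
      omega]
    rw [Set.image_insert_eq, Set.image_insert_eq, Set.image_singleton, X_pow_eq_monomial,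
      X_pow_eq_monomial, X, X, monomial_mul, one_mul]

/-- A saturated Borel-fixed monomial ideal in `K[x_0, x_1, x_2]` over an infinite field of
characteristic `≠ 2`, with Hilbert polynomial of the quotient the constant `4`, is
`⟨x_0, x_1^4⟩` or `⟨x_0^2, x_0 x_1, x_1^3⟩`. -/
theorem borelFixed_hilbPoly_four {K : Type} [Field K] [Infinite K] (hchar : (2 : K) ≠ 0)
    (I : Ideal (MvPolynomial (Fin 3) K))
    (hmon : IsMonomialIdeal I) (hbf : BorelFixed I)
    (hsat : idealSat I (irrelevant 3 K) = I)
    (hhp : ∃ N : ℕ, ∀ i ≥ N, hfn I i = 4) :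
    I = Ideal.span {(X 0 : MvPolynomial (Fin 3) K), X 1 ^ 4} ∨
    I = Ideal.span {(X 0 ^ 2 : MvPolynomial (Fin 3) K), X 0 * X 1, X 1 ^ 3} :=
  borelFixed_hilbPoly_four_general hchar I hmon hbf hsat hhp
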